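/- For every k ∈ ℕ, m > k and p,q ∈ [0,1], the site percolation measure P̃ on {0,1}^{ℤ²} induced from P_{p,q} by declaring a vertex v = (x,y) ∈ ℤ² open if and only if the event C_m(S_{v,m}) occurs for the box S_{v,m} = [mx+1, mx+m]×[my+1, my+m]×{0,…,k}, is 5-independent: whenever U and V are sets of vertices of ℤ² at graph distance at least 5 from each other, the states of the vertices in U are independent (under P̃) of the states of the vertices in V. -/

import Mathlib

open MeasureTheory Set
open scoped ENNReal

namespace AnisoSlab

/-! ### A concrete construction of countable products of Bernoulli measures

The product Bernoulli measure on `ι → Bool` (each coordinate `i` open with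
probability `P i`, independently) is realized as the pushforward of Lebesgue
measure on `[0,1)`: the binary digits of a uniform sample are i.i.d. fair
coins; regrouping them along a pairing function yields countably many
independent uniform samples, and comparing the `i`-th sample with `P i`
yields the desired independent Bernoulli coordinates. -/

/-- The `n`-th binary digit of `x` (digits after the binary point). -/
noncomputable def binDigit (n : ℕ) (x : ℝ) : Bool :=
  decide (⌊x * 2 ^ (n + 1)⌋ % 2 = 1)

/-- Countably many independent uniform-`[0,1]` samples extracted from a single
uniform sample `x` on `[0,1)`, by regrouping its binary digits. -/
noncomputable def unifSample (i : ℕ) (x : ℝ) : ℝ :=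
  ∑' n : ℕ, if binDigit (Nat.pair i n) x then ((2 : ℝ) ^ (n + 1))⁻¹ else 0

/-- The product Bernoulli measure on `ι → Bool`, coordinate `i` being `true`
with probability `P i`, independently over `i`. -/
noncomputable def bernoulliProduct {ι : Type*} [Encodable ι] (P : ι → ℝ) :
    Measure (ι → Bool) :=
  Measure.map (fun x i => decide (unifSample (Encodable.encode i) x < P i))
    (volume.restrict (Set.Ico (0 : ℝ) 1))

/-! ### The slab `S^k` and anisotropic bond percolation on it -/

/-- Ambient vertices: `ℤ³`; the slab `S^k` uses those with third coordinate in `{0, …, k}`. -/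
abbrev Vtx : Type := ℤ × ℤ × ℤ

/-- The three unit coordinate vectors. -/
def dvec : Fin 3 → Vtx
  | 0 => (1, 0, 0)
  | 1 => (0, 1, 0)
  | 2 => (0, 0, 1)

/-- A bond is indexed by its lower endpoint `v` and a direction `i`; it joins
`v` to `v + dvec i`. Directions `0, 1` give radial (horizontal) bonds, and
direction `2` gives axial (vertical) bonds. -/
abbrev EdgeIdx : Type := Vtx × Fin 3

/-- A percolation configuration: each bond is open (`true`) or closed (`false`). -/
abbrev Config : Type := EdgeIdx → Bool

/-- `v` is a vertex of the slab `S^k`. -/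
def InSlab (k : ℕ) (v : Vtx) : Prop := 0 ≤ v.2.2 ∧ v.2.2 ≤ k

/-- `(v, i)` is a bond of the slab `S^k` (both endpoints lie in the slab). -/
def IsEdge (k : ℕ) (e : EdgeIdx) : Prop := InSlab k e.1 ∧ InSlab k (e.1 + dvec e.2)

/-- The measure `P_{p,q}` on configurations of `S^k`: each radial (horizontal)
bond is open with probability `p` and each axial (vertical) bond is open with
probability `q`, independently. -/
noncomputable def slabMeasure (k : ℕ) (p q : ℝ) : Measure Config :=
  bernoulliProduct (fun e => if e.2 = 2 then q else p)

/-- `x` and `y` are joined by an open bond of `S^k` in the configuration `ω`. -/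
def OpenAdj (k : ℕ) (ω : Config) (x y : Vtx) : Prop :=
  ∃ i : Fin 3,
    (y = x + dvec i ∧ IsEdge k (x, i) ∧ ω (x, i) = true) ∨
    (x = y + dvec i ∧ IsEdge k (y, i) ∧ ω (y, i) = true)

/-- The open cluster of the vertex `x` in the configuration `ω`. -/
def cluster (k : ℕ) (ω : Config) (x : Vtx) : Set Vtx :=
  {y | Relation.ReflTransGen (OpenAdj k ω) x y}

/-- The percolation function `θ(p,q) = P_{p,q}(0 ↔ ∞)`. -/
noncomputable def theta (k : ℕ) (p q : ℝ) : ℝ≥0∞ :=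
  slabMeasure k p q {ω | (cluster k ω 0).Infinite}

/-- `p_k = 1 - (1/2)^{1/(k+1)}`, the horizontal critical value at `q = 1`. -/
noncomputable def pCrit (k : ℕ) : ℝ := 1 - (1 / 2 : ℝ) ^ ((1 : ℝ) / (k + 1))

/-- The critical curve `q_c(p) = sup {q ∈ [0,1] : θ(p,q) = 0}`. -/
noncomputable def qc (k : ℕ) (p : ℝ) : ℝ :=
  sSup {q : ℝ | q ∈ Set.Icc (0 : ℝ) 1 ∧ theta k p q = 0}

/-- The critical curve `p_c(q) = sup {p ∈ [0,1] : θ(p,q) = 0}`. -/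
noncomputable def pc (k : ℕ) (q : ℝ) : ℝ :=
  sSup {p : ℝ | p ∈ Set.Icc (0 : ℝ) 1 ∧ theta k p q = 0}


/-- The sup-norm (maximum-norm) distance on `ℤ³`. -/
def supDist (x y : Vtx) : ℤ := max |x.1 - y.1| (max |x.2.1 - y.2.1| |x.2.2 - y.2.2|)

/-- The event `C_m(A)`: some vertex of `A` is connected by an open path to a
vertex at maximum-norm distance `m` from `A`. -/
def CmEvent (k m : ℕ) (A : Set Vtx) : Set Config :=
  {ω | ∃ x ∈ A, ∃ y ∈ cluster k ω x,
        (∀ a ∈ A, (m : ℤ) ≤ supDist y a) ∧ ∃ a ∈ A, supDist y a = (m : ℤ)}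

/-- The box `S_m = [0, m-1]² × {0,…,k}`. -/
def Sm (k m : ℕ) : Set Vtx :=
  {v | 0 ≤ v.1 ∧ v.1 ≤ (m : ℤ) - 1 ∧ 0 ≤ v.2.1 ∧ v.2.1 ≤ (m : ℤ) - 1 ∧ InSlab k v}

/-- The box `S_{v,m} = [mv₁+1, mv₁+m] × [mv₂+1, mv₂+m] × {0,…,k}`. -/
def Svm (k m : ℕ) (v : ℤ × ℤ) : Set Vtx :=
  {w | (m : ℤ) * v.1 + 1 ≤ w.1 ∧ w.1 ≤ (m : ℤ) * v.1 + m ∧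
       (m : ℤ) * v.2 + 1 ≤ w.2.1 ∧ w.2.1 ≤ (m : ℤ) * v.2 + m ∧ InSlab k w}

open scoped Classical in
/-- The induced site configuration on `ℤ²`: the site `v` is declared open iff
the event `C_m(S_{v,m})` occurs. -/
noncomputable def inducedSite (k m : ℕ) (ω : Config) : ℤ × ℤ → Bool :=
  fun v => decide (ω ∈ CmEvent k m (Svm k m v))

/-- The induced site percolation measure `P̃` on `{0,1}^{ℤ²}`. -/
noncomputable def inducedMeasure (k m : ℕ) (p q : ℝ) : Measure ((ℤ × ℤ) → Bool) :=
  Measure.map (inducedSite k m) (slabMeasure k p q)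

section Digits

lemma measurable_binDigit (n : ℕ) : Measurable (binDigit n) := by
  have h1 : Measurable fun x : ℝ => ⌊x * 2 ^ (n + 1)⌋ :=
    Int.measurable_floor.comp (measurable_id.mul_const _)
  exact (Measurable.of_discrete (f := fun z : ℤ => decide (z % 2 = 1))).comp h1

lemma binDigit_succ (n : ℕ) (x : ℝ) : binDigit (n + 1) x = binDigit n (2 * x) := by
  unfold binDigit
  have h : x * 2 ^ (n + 1 + 1) = (2 * x) * 2 ^ (n + 1) := by ring
  rw [h]

lemma binDigit_add_one (n : ℕ) (x : ℝ) : binDigit n (x + 1) = binDigit n x := by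
  unfold binDigit
  have h : (x + 1) * 2 ^ (n + 1) = x * 2 ^ (n + 1) + ((2 ^ (n + 1) : ℤ) : ℝ) := by
    push_cast; ring
  rw [h, Int.floor_add_intCast]
  have h2 : (⌊x * 2 ^ (n + 1)⌋ + (2 : ℤ) ^ (n + 1)) % 2 = ⌊x * 2 ^ (n + 1)⌋ % 2 := by
    rw [pow_succ (2:ℤ)]
    exact Int.add_mul_emod_self_right _ _ _
  rw [h2]

lemma binDigit_zero_lower {x : ℝ} (h0 : 0 ≤ x) (h1 : x < 2⁻¹) : binDigit 0 x = false := by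
  have h : ⌊x * 2 ^ (0 + 1)⌋ = 0 := by
    have h2 : x * 2 ^ (0 + 1) = 2 * x := by ring
    rw [h2, Int.floor_eq_zero_iff]
    constructor
    · nlinarith
    · nlinarith
  simp only [binDigit, h]
  decide

lemma binDigit_zero_upper {x : ℝ} (h0 : 2⁻¹ ≤ x) (h1 : x < 1) : binDigit 0 x = true := by
  have h : ⌊x * 2 ^ (0 + 1)⌋ = 1 := by
    have h2 : x * 2 ^ (0 + 1) = 2 * x := by ring
    rw [h2, Int.floor_eq_iff]
    constructor
    · push_cast; nlinarith
    · push_cast; nlinarith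
  simp only [binDigit, h]
  decide

/-- Cylinder set of reals whose binary digits in `F` are given by `b`. -/
def dcyl (F : Finset ℕ) (b : ℕ → Bool) : Set ℝ := {x | ∀ n ∈ F, binDigit n x = b n}

lemma measurableSet_dcyl (F : Finset ℕ) (b : ℕ → Bool) : MeasurableSet (dcyl F b) := by
  have h : dcyl F b = ⋂ n ∈ (F : Set ℕ), binDigit n ⁻¹' {b n} := by
    ext x; simp [dcyl]
  rw [h]
  exact MeasurableSet.biInter F.countable_toSet
    (fun n _ => (measurable_binDigit n) MeasurableSet.of_discrete)

/-- Shift a finite digit index set down by one, dropping `0`. -/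
def shiftF (F : Finset ℕ) : Finset ℕ := (F.erase 0).image (· - 1)

lemma mem_shiftF {F : Finset ℕ} {n : ℕ} : n ∈ shiftF F ↔ n + 1 ∈ F := by
  simp only [shiftF, Finset.mem_image, Finset.mem_erase]
  constructor
  · rintro ⟨a, ⟨ha0, haF⟩, rfl⟩
    have : a - 1 + 1 = a := by omega
    rwa [this]
  · intro h
    exact ⟨n + 1, ⟨by omega, h⟩, by omega⟩

lemma card_shiftF_of_mem {F : Finset ℕ} (h : 0 ∈ F) : F.card = (shiftF F).card + 1 := by
  have hinj : Set.InjOn (· - 1) (F.erase 0) := by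
    intro a ha b hb hab
    have ha0 : a ≠ 0 := (Finset.mem_erase.mp ha).1
    have hb0 : b ≠ 0 := (Finset.mem_erase.mp hb).1
    simp only at hab
    omega
  rw [shiftF, Finset.card_image_of_injOn hinj, Finset.card_erase_of_mem h]
  have : 0 < F.card := Finset.card_pos.mpr ⟨0, h⟩
  omega

lemma card_shiftF_of_not_mem {F : Finset ℕ} (h : 0 ∉ F) : (shiftF F).card = F.card := by
  have hinj : Set.InjOn (· - 1) (F.erase 0) := by
    intro a ha b hb hab
    have ha0 : a ≠ 0 := (Finset.mem_erase.mp ha).1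
    have hb0 : b ≠ 0 := (Finset.mem_erase.mp hb).1
    simp only at hab
    omega
  rw [shiftF, Finset.card_image_of_injOn hinj, Finset.erase_eq_of_notMem h]

lemma shiftF_lt {F : Finset ℕ} {N : ℕ} (h : ∀ n ∈ F, n < N + 1) : ∀ n ∈ shiftF F, n < N := by
  intro n hn
  have := h (n + 1) (mem_shiftF.mp hn)
  omega

end Digits
section Volume

lemma dcyl_lower {F : Finset ℕ} {b : ℕ → Bool} (hb : ¬(0 ∈ F ∧ b 0 = true)) :
    Ico (0:ℝ) 2⁻¹ ∩ dcyl F b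
      = (fun x : ℝ => 2 * x) ⁻¹' (Ico (0:ℝ) 1 ∩ dcyl (shiftF F) (fun n => b (n + 1))) := by
  ext x
  simp only [mem_inter_iff, mem_Ico, mem_preimage, dcyl, mem_setOf_eq]
  constructor
  · rintro ⟨⟨hx0, hx1⟩, hd⟩
    have h2 : (2:ℝ) * x < 1 := by
      have : (2:ℝ) * 2⁻¹ = 1 := by norm_num
      nlinarith
    refine ⟨⟨by linarith, h2⟩, ?_⟩
    intro n hn
    rw [← binDigit_succ]
    exact hd (n + 1) (mem_shiftF.mp hn)
  · rintro ⟨⟨hx0, hx1⟩, hd⟩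
    have hx0' : (0:ℝ) ≤ x := by linarith
    have hx1' : x < 2⁻¹ := by linarith
    refine ⟨⟨hx0', hx1'⟩, ?_⟩
    intro n hn
    match n with
    | 0 =>
      rw [binDigit_zero_lower hx0' hx1']
      rcases Bool.eq_false_or_eq_true (b 0) with h | h
      · exact absurd ⟨hn, h⟩ hb
      · exact h.symm
    | (m + 1) =>
      rw [binDigit_succ]
      exact hd m (mem_shiftF.mpr hn)

lemma dcyl_lower_empty {F : Finset ℕ} {b : ℕ → Bool} (h0 : 0 ∈ F) (hb : b 0 = true) :
    Ico (0:ℝ) 2⁻¹ ∩ dcyl F b = ∅ := by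
  ext x
  simp only [mem_inter_iff, mem_Ico, dcyl, mem_setOf_eq, mem_empty_iff_false, iff_false, not_and]
  rintro ⟨hx0, hx1⟩ hd
  have := hd 0 h0
  rw [binDigit_zero_lower hx0 hx1, hb] at this
  simp at this

lemma dcyl_upper {F : Finset ℕ} {b : ℕ → Bool} (hb : ¬(0 ∈ F ∧ b 0 = false)) :
    Ico (2⁻¹:ℝ) 1 ∩ dcyl F b
      = (fun x : ℝ => 2 * x - 1) ⁻¹' (Ico (0:ℝ) 1 ∩ dcyl (shiftF F) (fun n => b (n + 1))) := by
  have key : ∀ (n : ℕ) (x : ℝ), binDigit n (2 * x) = binDigit n (2 * x - 1) := by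
    intro n x
    have h := binDigit_add_one n (2 * x - 1)
    rwa [show 2 * x - 1 + 1 = 2 * x by ring] at h
  ext x
  simp only [mem_inter_iff, mem_Ico, mem_preimage, dcyl, mem_setOf_eq]
  constructor
  · rintro ⟨⟨hx0, hx1⟩, hd⟩
    have h2 : (0:ℝ) ≤ 2 * x - 1 := by
      have : (2:ℝ) * 2⁻¹ = 1 := by norm_num
      nlinarith
    refine ⟨⟨h2, by linarith⟩, ?_⟩
    intro n hn
    rw [← key, ← binDigit_succ]
    exact hd (n + 1) (mem_shiftF.mp hn)
  · rintro ⟨⟨hx0, hx1⟩, hd⟩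
    have hx0' : (2⁻¹:ℝ) ≤ x := by linarith
    have hx1' : x < 1 := by linarith
    refine ⟨⟨hx0', hx1'⟩, ?_⟩
    intro n hn
    match n with
    | 0 =>
      rw [binDigit_zero_upper hx0' hx1']
      rcases Bool.eq_false_or_eq_true (b 0) with h | h
      · exact h.symm
      · exact absurd ⟨hn, h⟩ hb
    | (m + 1) =>
      rw [binDigit_succ, key]
      exact hd m (mem_shiftF.mpr hn)

lemma dcyl_upper_empty {F : Finset ℕ} {b : ℕ → Bool} (h0 : 0 ∈ F) (hb : b 0 = false) :
    Ico (2⁻¹:ℝ) 1 ∩ dcyl F b = ∅ := by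
  ext x
  simp only [mem_inter_iff, mem_Ico, dcyl, mem_setOf_eq, mem_empty_iff_false, iff_false, not_and]
  rintro ⟨hx0, hx1⟩ hd
  have := hd 0 h0
  rw [binDigit_zero_upper hx0 hx1, hb] at this
  simp at this

lemma ofReal_half : ENNReal.ofReal |(2:ℝ)⁻¹| = 2⁻¹ := by
  rw [abs_of_nonneg (by norm_num : (0:ℝ) ≤ 2⁻¹)]
  rw [ENNReal.ofReal_inv_of_pos (by norm_num)]
  norm_num

lemma volume_double_preimage (S : Set ℝ) :
    volume ((fun x : ℝ => 2 * x) ⁻¹' S) = 2⁻¹ * volume S := by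
  have h := Real.volume_preimage_mul_left (a := 2) (by norm_num) S
  rw [show ((2:ℝ) * ·) = (fun x : ℝ => 2 * x) from rfl] at h
  rw [h, ofReal_half]

lemma volume_double_sub_preimage (S : Set ℝ) (hS : MeasurableSet S) :
    volume ((fun x : ℝ => 2 * x - 1) ⁻¹' S) = 2⁻¹ * volume S := by
  have hdec : (fun x : ℝ => 2 * x - 1) = (fun y : ℝ => y + (-1)) ∘ (fun x : ℝ => 2 * x) := by
    funext x; simp; ring
  rw [hdec, Set.preimage_comp, volume_double_preimage]
  have hmp := MeasureTheory.measurePreserving_add_right (volume : Measure ℝ) (-1)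
  rw [hmp.measure_preimage hS.nullMeasurableSet]

lemma volume_dcyl (N : ℕ) : ∀ (F : Finset ℕ) (b : ℕ → Bool), (∀ n ∈ F, n < N) →
    volume (Ico (0:ℝ) 1 ∩ dcyl F b) = 2⁻¹ ^ F.card := by
  induction N with
  | zero =>
    intro F b hF
    have hFe : F = ∅ := Finset.eq_empty_of_forall_notMem fun n hn => Nat.not_lt_zero n (hF n hn)
    subst hFe
    have : dcyl ∅ b = univ := by ext x; simp [dcyl]
    rw [this, inter_univ, Real.volume_Ico]
    simp
  | succ N ih =>
    intro F b hF
    have hsplit : Ico (0:ℝ) 1 ∩ dcyl F b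
        = (Ico (0:ℝ) 2⁻¹ ∩ dcyl F b) ∪ (Ico (2⁻¹:ℝ) 1 ∩ dcyl F b) := by
      rw [← union_inter_distrib_right, Set.Ico_union_Ico_eq_Ico (by norm_num) (by norm_num)]
    have hdisj : Disjoint (Ico (0:ℝ) 2⁻¹ ∩ dcyl F b) (Ico (2⁻¹:ℝ) 1 ∩ dcyl F b) :=
      (Set.Ico_disjoint_Ico_same).mono inter_subset_left inter_subset_left
    have hmeasu : MeasurableSet (Ico (2⁻¹:ℝ) 1 ∩ dcyl F b) :=
      measurableSet_Ico.inter (measurableSet_dcyl F b)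
    have hmeasS : MeasurableSet (Ico (0:ℝ) 1 ∩ dcyl (shiftF F) (fun n => b (n + 1))) :=
      measurableSet_Ico.inter (measurableSet_dcyl _ _)
    have hv' := ih (shiftF F) (fun n => b (n + 1)) (shiftF_lt hF)
    rw [hsplit, measure_union hdisj hmeasu]
    by_cases h0 : 0 ∈ F
    · rcases Bool.eq_false_or_eq_true (b 0) with hb | hb
      · -- b 0 = true : lower half is empty
        rw [dcyl_lower_empty h0 hb, dcyl_upper (by simp [hb]),
          volume_double_sub_preimage _ hmeasS, hv', measure_empty, zero_add,
          card_shiftF_of_mem h0, pow_succ, mul_comm]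
      · -- b 0 = false : upper half is empty
        rw [dcyl_upper_empty h0 hb, dcyl_lower (by simp [hb]),
          volume_double_preimage, hv', measure_empty, add_zero,
          card_shiftF_of_mem h0, pow_succ, mul_comm]
    · rw [dcyl_lower (by simp [h0]), dcyl_upper (by simp [h0]),
        volume_double_preimage, volume_double_sub_preimage _ hmeasS, hv',
        ← card_shiftF_of_not_mem h0]
      rw [← add_mul, ENNReal.inv_two_add_inv_two, one_mul]

end Volume
section DigitAlgebra

/-- The uniform probability measure on `[0,1)`. -/
noncomputable abbrev unif : Measure ℝ := volume.restrict (Set.Ico (0:ℝ) 1)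

instance : IsProbabilityMeasure unif := by
  constructor
  rw [Measure.restrict_apply MeasurableSet.univ, Set.univ_inter, Real.volume_Ico]
  norm_num

lemma unif_dcyl (F : Finset ℕ) (b : ℕ → Bool) : unif (dcyl F b) = 2⁻¹ ^ F.card := by
  rw [Measure.restrict_apply (measurableSet_dcyl F b), inter_comm]
  exact volume_dcyl (F.sup id + 1) F b
    (fun n hn => Nat.lt_succ_of_le (Finset.le_sup (f := id) hn))

/-- The σ-algebra on `ℝ` generated by the binary digits with indices in `S`. -/
noncomputable def digitAlg (S : Set ℕ) : MeasurableSpace ℝ :=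
  ⨆ n ∈ S, MeasurableSpace.comap (binDigit n) ⊤

lemma digitAlg_le (S : Set ℕ) : digitAlg S ≤ Real.measurableSpace :=
  iSup₂_le fun n _ => (measurable_binDigit n).comap_le

lemma comap_le_digitAlg {S : Set ℕ} {n : ℕ} (hn : n ∈ S) :
    MeasurableSpace.comap (binDigit n) ⊤ ≤ digitAlg S :=
  le_biSup (fun n => MeasurableSpace.comap (binDigit n) ⊤) hn

lemma measurable_binDigit_digitAlg {S : Set ℕ} {n : ℕ} (hn : n ∈ S) :
    Measurable[digitAlg S] (binDigit n) :=
  Measurable.of_comap_le (comap_le_digitAlg hn)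

/-- Cylinder π-system with digit indices in `S`. -/
def cylSys (S : Set ℕ) : Set (Set ℝ) :=
  {A | ∃ F : Finset ℕ, ↑F ⊆ S ∧ ∃ b : ℕ → Bool, A = dcyl F b}

lemma dcyl_inter {F1 F2 : Finset ℕ} {b1 b2 : ℕ → Bool}
    (hcomp : ∀ n, n ∈ F1 → n ∈ F2 → b1 n = b2 n) :
    dcyl F1 b1 ∩ dcyl F2 b2
      = dcyl (F1 ∪ F2) (fun n => if n ∈ F1 then b1 n else b2 n) := by
  ext x
  simp only [mem_inter_iff, dcyl, mem_setOf_eq]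
  constructor
  · rintro ⟨h1, h2⟩ n hn
    rcases Finset.mem_union.mp hn with h | h
    · rw [if_pos h]; exact h1 n h
    · by_cases hn1 : n ∈ F1
      · rw [if_pos hn1]; exact h1 n hn1
      · rw [if_neg hn1]; exact h2 n h
  · intro h
    constructor
    · intro n hn
      have := h n (Finset.mem_union_left _ hn)
      rwa [if_pos hn] at this
    · intro n hn
      have := h n (Finset.mem_union_right _ hn)
      by_cases hn1 : n ∈ F1
      · rw [if_pos hn1] at this; rw [this]; exact (hcomp n hn1 hn).symm ▸ rfl
      · rwa [if_neg hn1] at this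

lemma isPiSystem_cylSys (S : Set ℕ) : IsPiSystem (cylSys S) := by
  rintro A ⟨F1, hF1, b1, rfl⟩ B ⟨F2, hF2, b2, rfl⟩ hne
  obtain ⟨x0, hx01, hx02⟩ := hne
  have hcomp : ∀ n, n ∈ F1 → n ∈ F2 → b1 n = b2 n := by
    intro n h1 h2
    rw [← hx01 n h1, ← hx02 n h2]
  exact ⟨F1 ∪ F2, by
    rw [Finset.coe_union]
    exact Set.union_subset hF1 hF2, _, dcyl_inter hcomp⟩

lemma digitAlg_eq_generateFrom (S : Set ℕ) :
    digitAlg S = MeasurableSpace.generateFrom (cylSys S) := by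
  apply le_antisymm
  · refine iSup₂_le fun n hn => ?_
    rw [← measurable_iff_comap_le]
    refine @measurable_to_countable' Bool ℝ _ _ (MeasurableSpace.generateFrom (cylSys S))
      (binDigit n) (fun bv => ?_)
    apply MeasurableSpace.measurableSet_generateFrom
    refine ⟨{n}, by simpa using hn, fun _ => bv, ?_⟩
    ext x; simp [dcyl]
  · refine MeasurableSpace.generateFrom_le ?_
    rintro A ⟨F, hF, b, rfl⟩
    have h : dcyl F b = ⋂ n ∈ (F : Set ℕ), binDigit n ⁻¹' {b n} := by
      ext x; simp [dcyl]
    rw [h]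
    exact MeasurableSet.biInter F.countable_toSet fun n hn =>
      measurable_binDigit_digitAlg (hF hn) MeasurableSet.of_discrete

lemma indepSets_cylSys {S T : Set ℕ} (hST : Disjoint S T) :
    ProbabilityTheory.IndepSets (cylSys S) (cylSys T) unif := by
  rw [ProbabilityTheory.IndepSets_iff]
  rintro A B ⟨F1, hF1, b1, rfl⟩ ⟨F2, hF2, b2, rfl⟩
  have hdF : Disjoint F1 F2 := by
    rw [Finset.disjoint_left]
    intro a h1 h2
    exact (hST.le_bot ⟨hF1 h1, hF2 h2⟩ : a ∈ (⊥ : Set ℕ)).elim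
  rw [dcyl_inter (fun n h1 h2 => absurd (Finset.disjoint_left.mp hdF h1) (fun h => h h2)),
    unif_dcyl, unif_dcyl, unif_dcyl, Finset.card_union_of_disjoint hdF, pow_add]

lemma indep_digitAlg {S T : Set ℕ} (hST : Disjoint S T) :
    ProbabilityTheory.Indep (digitAlg S) (digitAlg T) unif :=
  ProbabilityTheory.IndepSets.indep (digitAlg_le S) (digitAlg_le T)
    (isPiSystem_cylSys S) (isPiSystem_cylSys T)
    (digitAlg_eq_generateFrom S) (digitAlg_eq_generateFrom T) (indepSets_cylSys hST)

end DigitAlgebra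
section BernoulliIndep

lemma measurable_unifSample_digitAlg {S : Set ℕ} {i : ℕ} (h : ∀ n, Nat.pair i n ∈ S) :
    Measurable[digitAlg S] (unifSample i) := by
  have hterm : ∀ n : ℕ, Measurable[digitAlg S]
      (fun x => if binDigit (Nat.pair i n) x then ((2 : ℝ) ^ (n + 1))⁻¹ else 0) := by
    intro n
    exact (Measurable.of_discrete (f := fun bb : Bool => if bb then ((2:ℝ)^(n+1))⁻¹ else 0)).comp
      (measurable_binDigit_digitAlg (h n))
  have hpart : ∀ N : ℕ, Measurable[digitAlg S]
      (fun x => ∑ n ∈ Finset.range N,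
        if binDigit (Nat.pair i n) x then ((2 : ℝ) ^ (n + 1))⁻¹ else 0) :=
    fun N => Finset.measurable_sum _ (fun n _ => hterm n)
  refine @measurable_of_tendsto_metrizable ℝ ℝ (digitAlg S) _ _ _ _ _ _ hpart ?_
  rw [tendsto_pi_nhds]
  intro x
  have hsum : Summable (fun n => if binDigit (Nat.pair i n) x then ((2 : ℝ) ^ (n + 1))⁻¹ else 0) := by
    refine Summable.of_nonneg_of_le (fun n => ?_) (fun n => ?_)
      ((summable_geometric_of_lt_one (by norm_num : (0:ℝ) ≤ 2⁻¹)
        (by norm_num : (2⁻¹:ℝ) < 1)).mul_left 2⁻¹)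
    · split <;> positivity
    · have hle : ((2 : ℝ) ^ (n + 1))⁻¹ = 2⁻¹ * (2⁻¹ : ℝ) ^ n := by
        rw [← inv_pow, pow_succ, mul_comm]
      split
      · rw [hle]
      · positivity
  exact hsum.hasSum.tendsto_sum_nat

lemma measurable_bern_coord_digitAlg {S : Set ℕ} {i : ℕ} (h : ∀ n, Nat.pair i n ∈ S) (c : ℝ) :
    Measurable[digitAlg S] (fun x => decide (unifSample i x < c)) := by
  have h1 : Measurable (fun r : ℝ => decide (r < c)) := by
    refine measurable_to_countable' fun bv => ?_
    rcases Bool.eq_false_or_eq_true bv with hb | hb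
    · subst hb
      have : (fun r : ℝ => decide (r < c)) ⁻¹' {true} = Set.Iio c := by
        ext r; simp
      rw [this]; exact measurableSet_Iio
    · subst hb
      have : (fun r : ℝ => decide (r < c)) ⁻¹' {false} = Set.Ici c := by
        ext r; simp
      rw [this]; exact measurableSet_Ici
  exact h1.comp (measurable_unifSample_digitAlg h)

/-- Digit indices used by the coordinates in `E`. -/
def digitSet {ι : Type*} [Encodable ι] (E : Set ι) : Set ℕ :=
  {N | ∃ e ∈ E, ∃ n : ℕ, N = Nat.pair (Encodable.encode e) n}

lemma disjoint_digitSet {ι : Type*} [Encodable ι] {E1 E2 : Set ι} (h : Disjoint E1 E2) :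
    Disjoint (digitSet E1) (digitSet E2) := by
  rw [Set.disjoint_left]
  rintro N ⟨e1, he1, n1, rfl⟩ ⟨e2, he2, n2, hN⟩
  have := (Nat.pair_eq_pair.mp hN).1
  have he : e1 = e2 := Encodable.encode_injective this
  subst he
  exact Set.disjoint_left.mp h he1 he2

lemma measurable_restrict_bern {ι : Type*} [Encodable ι] (P : ι → ℝ) (E : Set ι) :
    Measurable[digitAlg (digitSet E)]
      (fun x (e : E) => decide (unifSample (Encodable.encode (e : ι)) x < P e)) := by
  rw [@measurable_pi_iff _ _ _ (digitAlg (digitSet E))]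
  intro e
  refine measurable_bern_coord_digitAlg (S := digitSet E) (fun n => ?_) (P (e : ι))
  exact ⟨e, e.2, n, rfl⟩

lemma measurable_bernMap {ι : Type*} [Encodable ι] (P : ι → ℝ) :
    Measurable (fun x (i : ι) => decide (unifSample (Encodable.encode i) x < P i)) := by
  refine measurable_pi_lambda _ fun i => ?_
  have h := measurable_bern_coord_digitAlg (S := Set.univ) (i := Encodable.encode i)
    (fun n => Set.mem_univ _) (P i)
  exact h.mono (digitAlg_le _) le_rfl

lemma indep_bernoulliProduct {ι : Type*} [Encodable ι] (P : ι → ℝ) {E1 E2 : Set ι}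
    (hE : Disjoint E1 E2) :
    ProbabilityTheory.Indep
      (MeasurableSpace.comap (fun ω : ι → Bool => fun e : E1 => ω e) MeasurableSpace.pi)
      (MeasurableSpace.comap (fun ω : ι → Bool => fun e : E2 => ω e) MeasurableSpace.pi)
      (bernoulliProduct P) := by
  rw [ProbabilityTheory.Indep_iff]
  rintro t1 t2 ⟨s1, hs1, rfl⟩ ⟨s2, hs2, rfl⟩
  have hr1 : Measurable (fun ω : ι → Bool => fun e : E1 => ω e) :=
    measurable_pi_lambda _ fun e => measurable_pi_apply _
  have hr2 : Measurable (fun ω : ι → Bool => fun e : E2 => ω e) :=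
    measurable_pi_lambda _ fun e => measurable_pi_apply _
  have hF := measurable_bernMap P
  rw [bernoulliProduct, Measure.map_apply hF ((hr1 hs1).inter (hr2 hs2)),
    Measure.map_apply hF (hr1 hs1), Measure.map_apply hF (hr2 hs2), Set.preimage_inter]
  have hind := indep_digitAlg (disjoint_digitSet hE)
  rw [ProbabilityTheory.Indep_iff] at hind
  refine hind _ _ ?_ ?_
  · exact (measurable_restrict_bern P E1) hs1
  · exact (measurable_restrict_bern P E2) hs2

end BernoulliIndep
section Locality

open scoped Classical

lemma supDist_self (x : Vtx) : supDist x x = 0 := by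
  simp [supDist]

lemma abs_dvec (i : Fin 3) :
    |(dvec i).1| ≤ 1 ∧ |(dvec i).2.1| ≤ 1 ∧ |(dvec i).2.2| ≤ 1 := by
  fin_cases i <;> simp [dvec]

lemma supDist_step_le {x a d : Vtx} (h1 : |d.1| ≤ 1) (h2 : |d.2.1| ≤ 1) (h3 : |d.2.2| ≤ 1) :
    supDist (x + d) a ≤ supDist x a + 1 := by
  have k1 : |x.1 - a.1| ≤ supDist x a := le_max_left _ _
  have k2 : |x.2.1 - a.2.1| ≤ supDist x a := le_trans (le_max_left _ _) (le_max_right _ _)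
  have k3 : |x.2.2 - a.2.2| ≤ supDist x a := le_trans (le_max_right _ _) (le_max_right _ _)
  have e1 : |x.1 + d.1 - a.1| ≤ |x.1 - a.1| + |d.1| := by
    have : x.1 + d.1 - a.1 = (x.1 - a.1) + d.1 := by ring
    rw [this]; exact abs_add_le _ _
  have e2 : |x.2.1 + d.2.1 - a.2.1| ≤ |x.2.1 - a.2.1| + |d.2.1| := by
    have : x.2.1 + d.2.1 - a.2.1 = (x.2.1 - a.2.1) + d.2.1 := by ring
    rw [this]; exact abs_add_le _ _
  have e3 : |x.2.2 + d.2.2 - a.2.2| ≤ |x.2.2 - a.2.2| + |d.2.2| := by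
    have : x.2.2 + d.2.2 - a.2.2 = (x.2.2 - a.2.2) + d.2.2 := by ring
    rw [this]; exact abs_add_le _ _
  show max |(x + d).1 - a.1| (max |(x + d).2.1 - a.2.1| |(x + d).2.2 - a.2.2|) ≤ _
  have hx1 : (x + d).1 = x.1 + d.1 := rfl
  have hx2 : (x + d).2.1 = x.2.1 + d.2.1 := rfl
  have hx3 : (x + d).2.2 = x.2.2 + d.2.2 := rfl
  rw [hx1, hx2, hx3]
  refine max_le (by linarith) (max_le (by linarith) (by linarith))

lemma openAdj_supDist_le {k : ℕ} {ω : Config} {x w : Vtx} (h : OpenAdj k ω x w) (a : Vtx) :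
    supDist w a ≤ supDist x a + 1 := by
  obtain ⟨i, hc⟩ := h
  obtain ⟨h1, h2, h3⟩ := abs_dvec i
  rcases hc with ⟨heq, -, -⟩ | ⟨heq, -, -⟩
  · rw [heq]; exact supDist_step_le h1 h2 h3
  · have hw : w = x + (-(dvec i)) := by
      rw [heq]; ext <;> simp
    rw [hw]
    have h1' : |(-(dvec i)).1| ≤ 1 := by rw [show (-(dvec i)).1 = -((dvec i).1) from rfl, abs_neg]; exact h1
    have h2' : |(-(dvec i)).2.1| ≤ 1 := by rw [show (-(dvec i)).2.1 = -((dvec i).2.1) from rfl, abs_neg]; exact h2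
    have h3' : |(-(dvec i)).2.2| ≤ 1 := by rw [show (-(dvec i)).2.2 = -((dvec i).2.2) from rfl, abs_neg]; exact h3
    exact supDist_step_le h1' h2' h3'

lemma openAdj_restrict {k : ℕ} {ω : Config} {E : Set EdgeIdx} {m : ℕ} {A : Set Vtx}
    (hE : ∀ (w : Vtx) (i : Fin 3), (∃ a ∈ A, supDist w a ≤ (m:ℤ)) → (w, i) ∈ E)
    {x w : Vtx} (h : OpenAdj k ω x w)
    (hx : ∃ a ∈ A, supDist x a ≤ (m:ℤ)) (hw : ∃ a ∈ A, supDist w a ≤ (m:ℤ)) :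
    OpenAdj k (fun e => if e ∈ E then ω e else false) x w := by
  obtain ⟨i, hc⟩ := h
  refine ⟨i, ?_⟩
  rcases hc with ⟨heq, hedge, hopen⟩ | ⟨heq, hedge, hopen⟩
  · exact Or.inl ⟨heq, hedge, by have hmem : (x, i) ∈ E := hE x i hx; simp [hmem, hopen]⟩
  · exact Or.inr ⟨heq, hedge, by have hmem : (w, i) ∈ E := hE w i hw; simp [hmem, hopen]⟩

lemma openAdj_mono {k : ℕ} {ω ω' : Config} (h : ∀ e, ω' e = true → ω e = true)
    {x w : Vtx} (hadj : OpenAdj k ω' x w) : OpenAdj k ω x w := by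
  obtain ⟨i, hc⟩ := hadj
  refine ⟨i, ?_⟩
  rcases hc with ⟨heq, hedge, hopen⟩ | ⟨heq, hedge, hopen⟩
  · exact Or.inl ⟨heq, hedge, h _ hopen⟩
  · exact Or.inr ⟨heq, hedge, h _ hopen⟩

lemma trunc_path {k m : ℕ} {A : Set Vtx} {E : Set EdgeIdx} {ω : Config}
    (hE : ∀ (w : Vtx) (i : Fin 3), (∃ a ∈ A, supDist w a ≤ (m:ℤ)) → (w, i) ∈ E)
    {x y : Vtx} (hxy : Relation.ReflTransGen (OpenAdj k ω) x y) :
    (∃ a ∈ A, supDist x a < (m:ℤ)) → (∀ a ∈ A, (m:ℤ) ≤ supDist y a) →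
    ∃ z, (∀ a ∈ A, (m:ℤ) ≤ supDist z a) ∧ (∃ a ∈ A, supDist z a = (m:ℤ)) ∧
      Relation.ReflTransGen (OpenAdj k (fun e => if e ∈ E then ω e else false)) x z := by
  induction hxy using Relation.ReflTransGen.head_induction_on with
  | refl =>
    rintro ⟨a, haA, ha⟩ hfar
    exact absurd (hfar a haA) (not_le.mpr ha)
  | @head x w hxw hwy ih =>
    rintro ⟨a, haA, ha⟩ hfar
    by_cases hw : ∀ b ∈ A, (m:ℤ) ≤ supDist w b
    · have h1 : supDist w a ≤ (m:ℤ) := le_trans (openAdj_supDist_le hxw a) (by linarith)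
      refine ⟨w, hw, ⟨a, haA, le_antisymm h1 (hw a haA)⟩, Relation.ReflTransGen.single ?_⟩
      exact openAdj_restrict hE hxw ⟨a, haA, ha.le⟩ ⟨a, haA, h1⟩
    · push_neg at hw
      obtain ⟨b, hbA, hb⟩ := hw
      obtain ⟨z, hz1, hz2, hz3⟩ := ih ⟨b, hbA, hb⟩ hfar
      refine ⟨z, hz1, hz2, Relation.ReflTransGen.head ?_ hz3⟩
      exact openAdj_restrict hE hxw ⟨a, haA, ha.le⟩ ⟨b, hbA, hb.le⟩

/-- `CmEvent k m A` only depends on the bonds in `E`, provided `E` contains all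
bonds whose lower endpoint is within distance `m` of `A`. -/
lemma cmEvent_restrict {k m : ℕ} (hm : 1 ≤ m) {A : Set Vtx} {E : Set EdgeIdx}
    (hE : ∀ (w : Vtx) (i : Fin 3), (∃ a ∈ A, supDist w a ≤ (m:ℤ)) → (w, i) ∈ E)
    (ω : Config) :
    ω ∈ CmEvent k m A ↔ (fun e => if e ∈ E then ω e else false) ∈ CmEvent k m A := by
  constructor
  · rintro ⟨x, hxA, y, hy, hfar, -⟩
    have hnear : ∃ a ∈ A, supDist x a < (m:ℤ) := by
      refine ⟨x, hxA, ?_⟩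
      rw [supDist_self]
      exact_mod_cast Nat.lt_of_lt_of_le Nat.zero_lt_one hm
    obtain ⟨z, hz1, hz2, hz3⟩ := trunc_path hE hy hnear hfar
    exact ⟨x, hxA, z, hz3, hz1, hz2⟩
  · rintro ⟨x, hxA, y, hy, hfar, hex⟩
    refine ⟨x, hxA, y, ?_, hfar, hex⟩
    refine Relation.ReflTransGen.mono (fun u v h => ?_) _ _ hy
    refine openAdj_mono (fun e he => ?_) h
    by_cases hEe : e ∈ E
    · simpa [hEe] using he
    · simp [hEe] at he

end Locality
section EventMeasurable

open scoped Classical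

lemma measurableSet_openAdjEvent (k : ℕ) (x y : Vtx) :
    MeasurableSet {ω : Config | OpenAdj k ω x y} := by
  have h : {ω : Config | OpenAdj k ω x y} = ⋃ i : Fin 3,
      ((if y = x + dvec i ∧ IsEdge k (x, i) then
          (fun ω : Config => ω (x, i)) ⁻¹' {true} else (∅ : Set Config)) ∪
       (if x = y + dvec i ∧ IsEdge k (y, i) then
          (fun ω : Config => ω (y, i)) ⁻¹' {true} else (∅ : Set Config))) := by
    ext ω
    simp only [mem_setOf_eq, OpenAdj, mem_iUnion, mem_union]
    constructor
    · rintro ⟨i, ⟨h1, h2, h3⟩ | ⟨h1, h2, h3⟩⟩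
      · exact ⟨i, Or.inl (by rw [if_pos ⟨h1, h2⟩]; exact h3)⟩
      · exact ⟨i, Or.inr (by rw [if_pos ⟨h1, h2⟩]; exact h3)⟩
    · rintro ⟨i, h | h⟩
      · by_cases hc : y = x + dvec i ∧ IsEdge k (x, i)
        · rw [if_pos hc] at h
          exact ⟨i, Or.inl ⟨hc.1, hc.2, h⟩⟩
        · rw [if_neg hc] at h
          exact absurd h (notMem_empty ω)
      · by_cases hc : x = y + dvec i ∧ IsEdge k (y, i)
        · rw [if_pos hc] at h
          exact ⟨i, Or.inr ⟨hc.1, hc.2, h⟩⟩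
        · rw [if_neg hc] at h
          exact absurd h (notMem_empty ω)
  rw [h]
  refine MeasurableSet.iUnion fun i => MeasurableSet.union ?_ ?_ <;>
    · split_ifs
      · exact (measurable_pi_apply _) MeasurableSet.of_discrete
      · exact MeasurableSet.empty

lemma measurableSet_chainEvent (k : ℕ) (l : List Vtx) : ∀ x : Vtx,
    MeasurableSet {ω : Config | List.Chain (OpenAdj k ω) x l} := by
  induction l with
  | nil =>
    intro x
    have h : {ω : Config | List.Chain (OpenAdj k ω) x []} = Set.univ := by
      ext ω
      simp only [mem_setOf_eq, mem_univ, iff_true]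
      exact List.Chain.nil
    rw [h]
    exact MeasurableSet.univ
  | cons b t ih =>
    intro x
    have h : {ω : Config | List.Chain (OpenAdj k ω) x (b :: t)}
        = {ω : Config | OpenAdj k ω x b} ∩ {ω : Config | List.Chain (OpenAdj k ω) b t} := by
      ext ω; simp [List.Chain, List.chain_cons]
    rw [h]
    exact (measurableSet_openAdjEvent k x b).inter (ih b)

lemma measurableSet_clusterEvent (k : ℕ) (x y : Vtx) :
    MeasurableSet {ω : Config | y ∈ cluster k ω x} := by
  have h : {ω : Config | y ∈ cluster k ω x} = ⋃ l : List Vtx,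
      {ω : Config | List.Chain (OpenAdj k ω) x l
        ∧ (x :: l).getLast (List.cons_ne_nil _ _) = y} := by
    ext ω
    simp only [mem_iUnion, mem_setOf_eq, cluster]
    constructor
    · intro hh
      exact List.exists_isChain_cons_of_relationReflTransGen hh
    · rintro ⟨l, h1, h2⟩
      exact List.relationReflTransGen_of_exists_isChain_cons l h1 h2
  rw [h]
  refine MeasurableSet.iUnion fun l => ?_
  by_cases hl : (x :: l).getLast (List.cons_ne_nil _ _) = y
  · simp only [hl, and_true]
    exact measurableSet_chainEvent k l x
  · simp only [hl, and_false, setOf_false]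
    exact MeasurableSet.empty

lemma measurableSet_cmEvent (k m : ℕ) (A : Set Vtx) : MeasurableSet (CmEvent k m A) := by
  have h : CmEvent k m A = ⋃ x : Vtx, ⋃ y : Vtx,
      (if x ∈ A ∧ (∀ a ∈ A, (m:ℤ) ≤ supDist y a) ∧ (∃ a ∈ A, supDist y a = (m:ℤ)) then
        {ω : Config | y ∈ cluster k ω x} else (∅ : Set Config)) := by
    ext ω
    simp only [CmEvent, mem_setOf_eq, mem_iUnion]
    constructor
    · rintro ⟨x, hxA, y, hy, hfar, hex⟩
      exact ⟨x, y, by rw [if_pos ⟨hxA, hfar, hex⟩]; exact hy⟩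
    · rintro ⟨x, y, hh⟩
      by_cases hc : x ∈ A ∧ (∀ a ∈ A, (m:ℤ) ≤ supDist y a) ∧ (∃ a ∈ A, supDist y a = (m:ℤ))
      · rw [if_pos hc] at hh
        exact ⟨x, hc.1, y, hh, hc.2.1, hc.2.2⟩
      · rw [if_neg hc] at hh
        exact absurd hh (notMem_empty ω)
  rw [h]
  refine MeasurableSet.iUnion fun x => MeasurableSet.iUnion fun y => ?_
  split_ifs
  · exact measurableSet_clusterEvent k x y
  · exact MeasurableSet.empty

/-- A measurable set of configurations that depends only on the bonds in `E` is
measurable with respect to the σ-algebra pulled back from the restriction to `E`. -/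
lemma measurableSet_comap_restrict {E : Set EdgeIdx} {C : Set Config}
    (hC : MeasurableSet C)
    (h : ∀ ω : Config, ω ∈ C ↔ (fun e => if e ∈ E then ω e else false) ∈ C) :
    MeasurableSet[MeasurableSpace.comap (fun ω : Config => fun e : E => ω e)
      MeasurableSpace.pi] C := by
  have hext : Measurable (fun σ : E → Bool =>
      (fun e => if he : e ∈ E then σ ⟨e, he⟩ else false : Config)) := by
    refine measurable_pi_lambda _ fun e => ?_
    by_cases he : e ∈ E
    · simp only [dif_pos he]
      exact measurable_pi_apply _
    · simp only [dif_neg he]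
      exact measurable_const
  refine ⟨(fun σ : E → Bool => (fun e => if he : e ∈ E then σ ⟨e, he⟩ else false : Config)) ⁻¹' C,
    hext hC, ?_⟩
  ext ω
  simp only [mem_preimage]
  have hfun : (fun e => if he : e ∈ E then (fun e' : E => ω e') ⟨e, he⟩ else false : Config)
      = (fun e => if e ∈ E then ω e else false) := by
    funext e
    by_cases he : e ∈ E
    · simp [he]
    · simp [he]
  rw [hfun]
  exact (h ω).symm

end EventMeasurable

section Separation

lemma coord_sep {m : ℕ} (hm : 1 ≤ m) {u1 v1 a1 b1 w1 : ℤ} (h3 : 3 ≤ |u1 - v1|)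
    (ha1 : (m:ℤ) * u1 + 1 ≤ a1) (ha2 : a1 ≤ (m:ℤ) * u1 + m)
    (hb1 : (m:ℤ) * v1 + 1 ≤ b1) (hb2 : b1 ≤ (m:ℤ) * v1 + m)
    (hwa : |w1 - a1| ≤ (m:ℤ)) (hwb : |w1 - b1| ≤ (m:ℤ)) : False := by
  have habs : |a1 - b1| ≤ 2 * (m:ℤ) := by
    have h1 : |a1 - b1| ≤ |a1 - w1| + |w1 - b1| := abs_sub_le a1 w1 b1
    have h2 : |a1 - w1| = |w1 - a1| := abs_sub_comm a1 w1
    linarith [h1, h2 ▸ h1]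
  have hab := abs_le.mp habs
  have hm' : (0:ℤ) ≤ (m:ℤ) := by positivity
  rcases abs_cases (u1 - v1) with ⟨heq, -⟩ | ⟨heq, -⟩
  · have h3' : 3 ≤ u1 - v1 := by linarith [heq ▸ h3]
    have hmul : (m:ℤ) * 3 ≤ (m:ℤ) * (u1 - v1) := mul_le_mul_of_nonneg_left h3' hm'
    have hexp : (m:ℤ) * (u1 - v1) = (m:ℤ) * u1 - (m:ℤ) * v1 := by ring
    linarith [hab.2]
  · have h3' : 3 ≤ v1 - u1 := by linarith [heq ▸ h3]
    have hmul : (m:ℤ) * 3 ≤ (m:ℤ) * (v1 - u1) := mul_le_mul_of_nonneg_left h3' hm'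
    have hexp : (m:ℤ) * (v1 - u1) = (m:ℤ) * v1 - (m:ℤ) * u1 := by ring
    linarith [hab.1]

end Separation
section Assembly

open scoped Classical

lemma measurable_inducedSite (k m : ℕ) : Measurable (inducedSite k m) := by
  refine measurable_pi_lambda _ fun v => ?_
  refine measurable_to_countable' fun bv => ?_
  rcases Bool.eq_false_or_eq_true bv with hb | hb
  · subst hb
    have h : (fun ω : Config => inducedSite k m ω v) ⁻¹' {true}
        = CmEvent k m (Svm k m v) := by
      ext ω; simp [inducedSite]
    rw [h]
    exact measurableSet_cmEvent k m _
  · subst hb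
    have h : (fun ω : Config => inducedSite k m ω v) ⁻¹' {false}
        = (CmEvent k m (Svm k m v))ᶜ := by
      ext ω; simp [inducedSite]
    rw [h]
    exact (measurableSet_cmEvent k m _).compl

lemma measurable_inducedSite_restrict (k m : ℕ) (hm : 1 ≤ m) (W : Set (ℤ × ℤ))
    (E : Set EdgeIdx)
    (hE : ∀ u ∈ W, ∀ (w : Vtx) (i : Fin 3),
      (∃ a ∈ Svm k m u, supDist w a ≤ (m:ℤ)) → (w, i) ∈ E) :
    Measurable[MeasurableSpace.comap (fun ω : Config => fun e : E => ω e) MeasurableSpace.pi]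
      (fun ω : Config => fun u : W => inducedSite k m ω u) := by
  rw [@measurable_pi_iff _ _ _
    (MeasurableSpace.comap (fun ω : Config => fun e : E => ω e) MeasurableSpace.pi)]
  intro u
  have hC : MeasurableSet[MeasurableSpace.comap (fun ω : Config => fun e : E => ω e)
      MeasurableSpace.pi] (CmEvent k m (Svm k m u)) :=
    measurableSet_comap_restrict (measurableSet_cmEvent k m _)
      (cmEvent_restrict hm (hE u u.2))
  refine @measurable_to_countable' Bool Config _ _
    (MeasurableSpace.comap (fun ω : Config => fun e : E => ω e) MeasurableSpace.pi)
    _ (fun bv => ?_)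
  rcases Bool.eq_false_or_eq_true bv with hb | hb
  · subst hb
    have h : (fun ω : Config => inducedSite k m ω u) ⁻¹' {true}
        = CmEvent k m (Svm k m (u : ℤ × ℤ)) := by
      ext ω; simp [inducedSite]
    rw [h]
    exact hC
  · subst hb
    have h : (fun ω : Config => inducedSite k m ω u) ⁻¹' {false}
        = (CmEvent k m (Svm k m (u : ℤ × ℤ)))ᶜ := by
      ext ω; simp [inducedSite]
    rw [h]
    exact hC.compl

end Assembly
/-- The induced site percolation measure `P̃` on `{0,1}^{ℤ²}` is 5-independent:
if every site of `U` is at (graph) distance at least 5 from every site of `V`,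
then the states of the sites in `U` are independent of those in `V`. -/
theorem induced_five_independent (k m : ℕ) (hm : k < m) (p q : ℝ)
    (hp : p ∈ Set.Icc (0 : ℝ) 1) (hq : q ∈ Set.Icc (0 : ℝ) 1)
    (U V : Set (ℤ × ℤ))
    (hUV : ∀ u ∈ U, ∀ v ∈ V, (5 : ℤ) ≤ |u.1 - v.1| + |u.2 - v.2|) :
    ProbabilityTheory.Indep
      (MeasurableSpace.comap U.restrict inferInstance)
      (MeasurableSpace.comap V.restrict inferInstance)
      (inducedMeasure k m p q) := by
  have hm1 : 1 ≤ m := Nat.lt_of_le_of_lt (Nat.zero_le k) hm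
  set EU : Set EdgeIdx := {e | ∃ u ∈ U, ∃ a ∈ Svm k m u, supDist e.1 a ≤ (m:ℤ)} with hEUdef
  set EV : Set EdgeIdx := {e | ∃ v ∈ V, ∃ a ∈ Svm k m v, supDist e.1 a ≤ (m:ℤ)} with hEVdef
  have hdisj : Disjoint EU EV := by
    rw [Set.disjoint_left]
    rintro e ⟨u, hu, a, ha, hwa⟩ ⟨v, hv, b, hb, hwb⟩
    obtain ⟨ha1, ha2, ha3, ha4, -⟩ := ha
    obtain ⟨hb1, hb2, hb3, hb4, -⟩ := hb
    have h5 := hUV u hu v hv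
    have hd1 : (0:ℤ) ≤ |u.1 - v.1| := abs_nonneg _
    have hd2 : (0:ℤ) ≤ |u.2 - v.2| := abs_nonneg _
    have hcase : 3 ≤ |u.1 - v.1| ∨ 3 ≤ |u.2 - v.2| := by omega
    rcases hcase with h3 | h3
    · exact coord_sep hm1 h3 ha1 ha2 hb1 hb2
        (le_trans (le_max_left _ _) hwa) (le_trans (le_max_left _ _) hwb)
    · exact coord_sep hm1 h3 ha3 ha4 hb3 hb4
        (le_trans (le_trans (le_max_left _ _) (le_max_right _ _)) hwa)
        (le_trans (le_trans (le_max_left _ _) (le_max_right _ _)) hwb)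
  have hbond := indep_bernoulliProduct (fun e : EdgeIdx => if e.2 = 2 then q else p) hdisj
  have hfU := measurable_inducedSite_restrict k m hm1 U EU
    (fun u hu w i h => by
      obtain ⟨a, haS, haD⟩ := h
      exact ⟨u, hu, a, haS, haD⟩)
  have hfV := measurable_inducedSite_restrict k m hm1 V EV
    (fun v hv w i h => by
      obtain ⟨a, haS, haD⟩ := h
      exact ⟨v, hv, a, haS, haD⟩)
  rw [ProbabilityTheory.Indep_iff]
  rintro t1 t2 ⟨s1, hs1, rfl⟩ ⟨s2, hs2, rfl⟩
  have hrU : Measurable (U.restrict (π := fun _ => Bool)) := Set.measurable_restrict U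
  have hrV : Measurable (V.restrict (π := fun _ => Bool)) := Set.measurable_restrict V
  have hsite := measurable_inducedSite k m
  rw [inducedMeasure, Measure.map_apply hsite ((hrU hs1).inter (hrV hs2)),
    Measure.map_apply hsite (hrU hs1), Measure.map_apply hsite (hrV hs2),
    Set.preimage_inter]
  rw [ProbabilityTheory.Indep_iff] at hbond
  exact hbond _ _ (hfU hs1) (hfV hs2)

end AnisoSlab
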